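/- arXiv:1212.2817 — 3 statements merged into one kernel-verified Lean document; each statement's English description precedes it below -/
import Mathlib

section
/- Let X be a real separable infinite-dimensional Banach space, let (f_i)_{i=1}^∞ be a sequence of norm-one continuous linear functionals on X, and let (α_i)_{i=1}^∞ be a sequence in the open interval (0,1) converging to 0. Define the slices S_i = {x ∈ X : ‖x‖ ≤ 1 and f_i(x) ≥ α_i} of the closed unit ball. Then the sequence (S_i) is not point-finite: there exists a point x with ‖x‖ ≤ 1 belonging to S_i for infinitely many i. -/
/-!
If some point `x` of the unit ball has `c ≤ f i x` for a fixed `c > 0` and infinitely many `i`,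
then `x` lies in infinitely many slices because `α i → 0`. Otherwise `f i → 0` pointwise and a
gliding hump produces the point. Pick `z i` in the ball with `1/2 < f i (z i)` and put
`x = ∑ j, 4⁻¹ ^ (j + 1) • z (n j)`, where `n k ≥ k` is chosen so that `α (n k)` is small and
`f (n k)` almost vanishes on the partial sum of the first `k` terms. In `f (n k) x` the `k`-th term
contributes more than `4⁻¹ ^ (k + 1) / 2`, the tail at most a third of that, and the head almost
nothing.
-/

open Filter Topology Finset

section

variable {X : Type*} [NormedAddCommGroup X]

lemma norm_tsum_nat_add_le_of_norm_le_geometric {w : ℕ → X}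
    (hw : ∀ j, ‖w j‖ ≤ 4⁻¹ ^ (j + 1)) (m : ℕ) :
    ‖∑' j, w (j + m)‖ ≤ 4⁻¹ ^ m / 3 := by
  have hgeom := (hasSum_geometric_of_lt_one (r := (4⁻¹ : ℝ)) (by norm_num) (by norm_num)).mul_left
    (4⁻¹ ^ (m + 1))
  rw [show (4⁻¹ : ℝ) ^ (m + 1) * (1 - 4⁻¹)⁻¹ = 4⁻¹ ^ m / 3 by rw [pow_succ]; norm_num; ring]
    at hgeom
  exact tsum_of_norm_bounded hgeom fun j => (hw (j + m)).trans_eq (by ring)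

variable [NormedSpace ℝ X]

lemma ContinuousLinearMap.exists_norm_le_one_lt_apply (f : X →L[ℝ] ℝ) {r : ℝ} (hr : r < ‖f‖) :
    ∃ z, ‖z‖ ≤ 1 ∧ r < f z := by
  obtain ⟨z, hz, hrz⟩ := f.exists_lt_apply_of_lt_opNorm hr
  rcases lt_abs.1 hrz with h | h
  · exact ⟨z, hz.le, h⟩
  · exact ⟨-z, by simpa using hz.le, by simpa using h⟩

lemma tendsto_apply_of_forall_norm_le_one {ι : Type*} {l : Filter ι} {f : ι → X →L[ℝ] ℝ}
    (h : ∀ x, ‖x‖ ≤ 1 → Tendsto (fun i => f i x) l (𝓝 0)) (y : X) :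
    Tendsto (fun i => f i y) l (𝓝 0) := by
  have ht : 0 < ‖y‖ + 1 := by positivity
  have hy : ‖(‖y‖ + 1)⁻¹ • y‖ ≤ 1 := by
    rw [norm_smul, norm_inv, Real.norm_of_nonneg ht.le, inv_mul_le_iff₀ ht]
    linarith
  simpa [map_smul, ht.ne'] using (h _ hy).const_mul (‖y‖ + 1)

lemma exists_frequently_le_apply_of_not_tendsto {ι : Type*} {l : Filter ι}
    {f : ι → X →L[ℝ] ℝ} {x : X} (hx : ‖x‖ ≤ 1) (h : ¬Tendsto (fun i => f i x) l (𝓝 0)) :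
    ∃ y, ‖y‖ ≤ 1 ∧ ∃ c > 0, ∃ᶠ i in l, c ≤ f i y := by
  rw [tendsto_order, not_and_or] at h
  push Not at h
  rcases h with ⟨a, ha, hfreq⟩ | ⟨a, ha, hfreq⟩
  · exact ⟨-x, by simpa using hx, -a, by linarith, hfreq.mono fun i hi => by simpa using hi⟩
  · exact ⟨x, hx, a, ha, hfreq⟩

lemma le_apply_tsum_of_norm_le_geometric [CompleteSpace X] {g : X →L[ℝ] ℝ} (hg : ‖g‖ ≤ 1)
    {w : ℕ → X} (hw : ∀ j, ‖w j‖ ≤ 4⁻¹ ^ (j + 1)) (k : ℕ) :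
    g (∑ j ∈ range k, w j) + g (w k) - 4⁻¹ ^ (k + 1) / 3 ≤ g (∑' j, w j) := by
  have hsum : Summable w :=
    .of_norm_bounded ((summable_geometric_of_lt_one (by norm_num) (by norm_num)).mul_left 4⁻¹)
      fun j => (hw j).trans_eq (pow_succ' _ _)
  set tail := ∑' j, w (j + (k + 1))
  have htail : |g tail| ≤ 4⁻¹ ^ (k + 1) / 3 :=
    calc |g tail| ≤ ‖g‖ * ‖tail‖ := g.le_opNorm tail
      _ ≤ 1 * (4⁻¹ ^ (k + 1) / 3) :=
        mul_le_mul hg (norm_tsum_nat_add_le_of_norm_le_geometric hw _) (norm_nonneg _) zero_le_one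
      _ = 4⁻¹ ^ (k + 1) / 3 := one_mul _
  rw [← hsum.sum_add_tsum_nat_add (k + 1), sum_range_succ, map_add, map_add]
  linarith [neg_abs_le (g tail)]

lemma exists_seq_eq_apply_sum_range {M β : Type*} [AddCommMonoid M] (next : ℕ → M → β)
    (w : ℕ → β → M) : ∃ n : ℕ → β, ∀ k, n k = next k (∑ j ∈ range k, w j (n j)) := by
  let s : ℕ → M := fun k => Nat.rec 0 (fun k sk => sk + w k (next k sk)) k
  refine ⟨fun k => next k (s k), fun k => congrArg (next k) ?_⟩
  induction k with
  | zero => rfl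
  | succ k ih => rw [sum_range_succ, ← ih]

theorem exists_frequently_le_apply_of_tendsto_zero [CompleteSpace X] {f : ℕ → X →L[ℝ] ℝ}
    (hf : ∀ i, ‖f i‖ = 1) (hnull : ∀ x, Tendsto (fun i => f i x) atTop (𝓝 0)) {α : ℕ → ℝ}
    (hα : Tendsto α atTop (𝓝 0)) : ∃ x, ‖x‖ ≤ 1 ∧ ∃ᶠ i in atTop, α i ≤ f i x := by
  set c : ℕ → ℝ := fun k => 4⁻¹ ^ (k + 1)
  have hc : ∀ k, 0 < c k := fun k => by positivity
  choose z hz_norm hz_apply using fun i =>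
    (f i).exists_norm_le_one_lt_apply (r := 1 / 2) (by rw [hf]; norm_num)
  -- The hump gives `c k / 2`, the tail costs `c k / 3` and the head `c k / 12`: `c k / 12` is left.
  have hnext : ∀ k s, ∃ i, k ≤ i ∧ α i ≤ c k / 12 ∧ -(c k / 12) ≤ f i s := fun k s =>
    ((eventually_ge_atTop k).and ((hα.eventually_le_const (by linarith [hc k])).and
      ((hnull s).eventually_const_le (by linarith [hc k])))).exists
  choose next hnext_ge hnext_α hnext_f using hnext
  obtain ⟨n, hn⟩ := exists_seq_eq_apply_sum_range next fun j i => c j • z i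
  have hw : ∀ j, ‖c j • z (n j)‖ ≤ 4⁻¹ ^ (j + 1) := fun j => by
    rw [norm_smul, Real.norm_of_nonneg (hc j).le]
    exact mul_le_of_le_one_right (hc j).le (hz_norm _)
  refine ⟨∑' j, c j • z (n j), ?_, frequently_atTop.2 fun k => ⟨n k, ?_, ?_⟩⟩
  · simpa using (norm_tsum_nat_add_le_of_norm_le_geometric hw 0).trans (by norm_num)
  · rw [hn]
    exact hnext_ge _ _
  · have hhead := hnext_f k (∑ j ∈ range k, c j • z (n j))
    have hα_small := hnext_α k (∑ j ∈ range k, c j • z (n j))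
    rw [← hn] at hhead hα_small
    have hhump : c k / 2 ≤ f (n k) (c k • z (n k)) := by
      rw [map_smul, smul_eq_mul]
      nlinarith [hz_apply (n k), hc k]
    have htail : f (n k) (∑ j ∈ range k, c j • z (n j)) + f (n k) (c k • z (n k)) - c k / 3 ≤
        f (n k) (∑' j, c j • z (n j)) :=
      le_apply_tsum_of_norm_le_geometric (hf (n k)).le hw k
    linarith

end

theorem slices_not_pointFinite_general
    (X : Type*) [NormedAddCommGroup X] [NormedSpace ℝ X] [CompleteSpace X]
    (f : ℕ → X →L[ℝ] ℝ) (hf : ∀ i, ‖f i‖ = 1)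
    (α : ℕ → ℝ)
    (hα0 : Tendsto α atTop (nhds 0)) :
    ∃ x : X, ‖x‖ ≤ 1 ∧ {i | ‖x‖ ≤ 1 ∧ α i ≤ f i x}.Infinite := by
  suffices ∃ x : X, ‖x‖ ≤ 1 ∧ ∃ᶠ i in atTop, α i ≤ f i x by
    obtain ⟨x, hx, hfreq⟩ := this
    exact ⟨x, hx, Nat.frequently_atTop_iff_infinite.1 (hfreq.mono fun i hi => ⟨hx, hi⟩)⟩
  by_cases hnull : ∀ x : X, ‖x‖ ≤ 1 → Tendsto (fun i => f i x) atTop (𝓝 0)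
  · exact exists_frequently_le_apply_of_tendsto_zero hf
      (tendsto_apply_of_forall_norm_le_one hnull) hα0
  · push Not at hnull
    obtain ⟨x, hx, hnx⟩ := hnull
    obtain ⟨y, hy, c, hc, hfreq⟩ := exists_frequently_le_apply_of_not_tendsto hx hnx
    exact ⟨y, hy, (hfreq.and_eventually (hα0.eventually_lt_const hc)).mono
      fun i h => h.2.le.trans h.1⟩

/-- If `(f_i)` are norm-one continuous linear functionals on a separable
infinite-dimensional real Banach space `X` and `(α_i) ⊆ (0,1)` converges to `0`, then
the sequence of slices `S_i = {x ∈ B_X : f_i(x) ≥ α_i}` of the closed unit ball is not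
point-finite: some point of the closed unit ball belongs to infinitely many slices. -/
theorem slices_not_pointFinite
    (X : Type*) [NormedAddCommGroup X] [NormedSpace ℝ X] [CompleteSpace X]
    [TopologicalSpace.SeparableSpace X] (hinf : ¬ FiniteDimensional ℝ X)
    (f : ℕ → X →L[ℝ] ℝ) (hf : ∀ i, ‖f i‖ = 1)
    (α : ℕ → ℝ) (hα : ∀ i, α i ∈ Set.Ioo (0 : ℝ) 1)
    (hα0 : Tendsto α atTop (nhds 0)) :
    ∃ x : X, ‖x‖ ≤ 1 ∧ {i | ‖x‖ ≤ 1 ∧ α i ≤ f i x}.Infinite :=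
  slices_not_pointFinite_general X f hf α hα0
end

section
/- Let X be a uniformly smooth real Banach space. For every ε > 0 there exists b > 0 such that: for every R > b, every x ∈ X with ‖x‖ = R, and every norm-one continuous linear functional f on X with f(x) = R, one has R − f(y) ≤ ε for all y ∈ X with ‖y‖ = R and ‖y − x‖ ≤ 2. (Equivalently, the distance from y to the hyperplane {t : f(t) = R} supporting the ball of radius R at x is at most ε.) -/
open Metric Set Filter

/-- A real normed space is *uniformly smooth* (its norm is uniformly Fréchet
differentiable on the unit sphere), expressed via the modulus of smoothness:
for every `ε > 0` there is `δ > 0` such that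
`‖x + y‖ + ‖x - y‖ ≤ 2 + ε * ‖y‖` whenever `‖x‖ = 1` and `‖y‖ ≤ δ`. -/
def UniformlySmooth (X : Type*) [NormedAddCommGroup X] [NormedSpace ℝ X] : Prop :=
  ∀ ε > 0, ∃ δ > 0, ∀ x y : X, ‖x‖ = 1 → ‖y‖ ≤ δ → ‖x + y‖ + ‖x - y‖ ≤ 2 + ε * ‖y‖

/-!
Put `h = y - x`. Since `x + h = y` lies on the sphere of radius `R`, the modulus of smoothness
bounds `‖x - h‖ = ‖2x - y‖` by `R + ε ‖h‖` once `‖h‖` is small compared with `R`. A norm-one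
functional with `f x = R` satisfies `2R - f y = f (2x - y) ≤ ‖2x - y‖`, whence `R - f y ≤ ε ‖h‖`.
For `‖h‖ ≤ 2` the right-hand side is uniformly small, and `‖h‖ ≤ δ R` holds as soon as `R > 2 / δ`.
-/

namespace UniformlySmooth

variable {X : Type*} [NormedAddCommGroup X] [NormedSpace ℝ X]

theorem exists_norm_add_add_norm_sub_le (hX : UniformlySmooth X) {ε : ℝ} (hε : 0 < ε) :
    ∃ δ > 0, ∀ x y : X, ‖y‖ ≤ δ * ‖x‖ → ‖x + y‖ + ‖x - y‖ ≤ 2 * ‖x‖ + ε * ‖y‖ := by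
  obtain ⟨δ, hδ, hsmooth⟩ := hX ε hε
  refine ⟨δ, hδ, fun x y hy => ?_⟩
  rcases eq_or_ne x 0 with rfl | hx
  · have : y = 0 := norm_le_zero_iff.mp (by simpa using hy)
    simp [this]
  have hx' : 0 < ‖x‖ := norm_pos_iff.mpr hx
  have hscaled := hsmooth (‖x‖⁻¹ • x) (‖x‖⁻¹ • y) (norm_smul_inv_norm hx) (by
    rw [norm_smul, norm_inv, norm_norm, inv_mul_le_iff₀ hx', mul_comm]
    exact hy)
  rw [← smul_add, ← smul_sub, norm_smul, norm_smul, norm_smul, norm_inv, norm_norm,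
    ← mul_add, inv_mul_le_iff₀ hx', mul_add, ← mul_assoc, mul_comm ‖x‖ ε, mul_assoc,
    mul_inv_cancel_left₀ hx'.ne'] at hscaled
  linarith

theorem exists_sub_apply_le_mul_norm_sub (hX : UniformlySmooth X) {ε : ℝ} (hε : 0 < ε) :
    ∃ δ > 0, ∀ x y : X, ‖y‖ = ‖x‖ → ‖y - x‖ ≤ δ * ‖x‖ →
      ∀ f : X →L[ℝ] ℝ, ‖f‖ ≤ 1 → f x = ‖x‖ → ‖x‖ - f y ≤ ε * ‖y - x‖ := by
  obtain ⟨δ, hδ, hmod⟩ := hX.exists_norm_add_add_norm_sub_le hε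
  refine ⟨δ, hδ, fun x y hy hyx f hf hfx => ?_⟩
  have hreflect : ‖y‖ + ‖x - (y - x)‖ ≤ 2 * ‖x‖ + ε * ‖y - x‖ := by
    simpa using hmod x (y - x) hyx
  have hf_le : f (x - (y - x)) ≤ ‖x - (y - x)‖ :=
    (le_abs_self _).trans ((f.le_of_opNorm_le hf _).trans_eq (one_mul _))
  simp only [map_sub, hfx] at hf_le
  linarith

end UniformlySmooth

/-- In a uniformly smooth space, any point of a sphere of sufficiently large radius `R`
admits "almost flat" neighborhoods of diameter `2`: for every `ε > 0` there is `b > 0`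
such that for `R > b`, `x` on the sphere of radius `R`, and `f` a norm-one functional
supporting the ball of radius `R` at `x` (i.e. `f x = R`), every point `y` of the sphere
with `‖y - x‖ ≤ 2` lies within distance `ε` of the supporting hyperplane
`{t : f t = R}`, i.e. `R - f y ≤ ε`. -/
theorem almost_flat_neighborhoods
    (X : Type*) [NormedAddCommGroup X] [NormedSpace ℝ X]
    (hsmooth : UniformlySmooth X) :
    ∀ ε > 0, ∃ b > 0, ∀ R > b, ∀ x : X, ‖x‖ = R →
      ∀ f : X →L[ℝ] ℝ, ‖f‖ = 1 → f x = R →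
        ∀ y : X, ‖y‖ = R → ‖y - x‖ ≤ 2 → R - f y ≤ ε := by
  intro ε hε
  obtain ⟨δ, hδ, hflat⟩ := hsmooth.exists_sub_apply_le_mul_norm_sub (half_pos hε)
  refine ⟨2 / δ, by positivity, fun R hR x hx f hf hfx y hy hyx => ?_⟩
  subst hx
  have hsmall : ‖y - x‖ ≤ δ * ‖x‖ := by
    rw [gt_iff_lt, div_lt_iff₀ hδ] at hR
    linarith
  calc ‖x‖ - f y ≤ ε / 2 * ‖y - x‖ := hflat x y hy hsmall f hf.le hfx
    _ ≤ ε / 2 * 2 := by gcongr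
    _ = ε := by ring
end

section
/- Let X be a uniformly rotund (uniformly convex) real Banach space, let b > 0 and x_0 ∈ X, and let (B_n)_{n=1}^∞ with B_n = B(x_n, R_n) be a sequence of closed balls in X such that R_n > b and x_0 ∉ int B_n for every n. Set F_n = conv(B_n \ int B(x_0, b)) (the closed convex hull of the part of B_n outside the open ball of center x_0 and radius b). If dist(x_0, F_n) → 0 as n → ∞, then R_n → ∞ as n → ∞. -/
/-!
Fix a bound `M` on the radii. Let `f` be a norming functional of `x_n - x₀`. If a point `z` of
`B_n` outside `int B(x₀, b)` had `f (z - x₀) < δ`, the unit vectors `(x_n - x₀)/‖x_n - x₀‖` and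
`(x_n - z)/R_n` would both almost norm `f`; by uniform convexity they are then `ε`-close, which
forces `‖z - x₀‖ ≤ M ε + δ < b`. So `F_n` lies in the half-space `δ ≤ f (· - x₀)`, and
`dist(x₀, F_n) ≥ δ` with `δ` depending only on `b`, `M` and the modulus of convexity.
-/

open Metric Set Filter

section

variable {E : Type*} [NormedAddCommGroup E] [NormedSpace ℝ E]

theorem apply_le_norm_of_norm_le_one {f : StrongDual ℝ E} (hf : ‖f‖ ≤ 1) (v : E) : f v ≤ ‖v‖ :=
  (le_abs_self _).trans ((f.le_of_opNorm_le hf v).trans_eq (one_mul _))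

theorem le_infDist_closedConvexHull_of_forall_le_dual {s : Set E} (hs : s.Nonempty)
    {f : StrongDual ℝ E} (hf : ‖f‖ ≤ 1) {x₀ : E} {δ : ℝ} (hfs : ∀ z ∈ s, δ ≤ f (z - x₀)) :
    δ ≤ infDist x₀ (closedConvexHull ℝ s) := by
  have hhalf : closedConvexHull ℝ s ⊆ {y | f x₀ + δ ≤ f y} :=
    closedConvexHull_min (fun z hz => by simpa [map_sub, le_sub_iff_add_le'] using hfs z hz)
      (convex_halfSpace_ge (f : E →ₗ[ℝ] ℝ).isLinear _)
      (isClosed_le continuous_const f.continuous)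
  refine (le_infDist (hs.mono subset_closedConvexHull)).2 fun y hy => ?_
  calc δ ≤ f (y - x₀) := by rw [map_sub]; linarith [show f x₀ + δ ≤ f y from hhalf hy]
    _ ≤ ‖y - x₀‖ := apply_le_norm_of_norm_le_one hf _
    _ = dist x₀ y := by rw [dist_comm, dist_eq_norm]

theorem norm_sub_le_mul_norm_inv_smul_sub_add {p q : E} {r : ℝ} (hr : 0 < r) (hrp : r ≤ ‖p‖) :
    ‖p - q‖ ≤ r * ‖‖p‖⁻¹ • p - r⁻¹ • q‖ + (‖p‖ - r) := by
  have hp : 0 < ‖p‖ := hr.trans_le hrp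
  have hsplit : p - q = r • (‖p‖⁻¹ • p - r⁻¹ • q) + (‖p‖ - r) • ‖p‖⁻¹ • p := by
    rw [smul_sub, sub_smul, smul_smul, smul_smul, smul_smul, mul_inv_cancel₀ hr.ne',
      mul_inv_cancel₀ hp.ne', one_smul, one_smul]
    abel
  rw [hsplit]
  refine (norm_add_le _ _).trans_eq ?_
  rw [norm_smul, norm_smul, norm_smul, norm_inv, norm_norm, inv_mul_cancel₀ hp.ne', mul_one,
    Real.norm_of_nonneg hr.le, Real.norm_of_nonneg (sub_nonneg.2 hrp)]

theorem le_dual_sub_of_dual_eq_norm {f : StrongDual ℝ E} (hf : ‖f‖ ≤ 1) {c x₀ z : E}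
    (hfc : f (c - x₀) = ‖c - x₀‖) {r η ε δ : ℝ} (hr : 0 < r) (hrc : r ≤ ‖c - x₀‖)
    (hclose : ∀ ⦃u w : E⦄, ‖u‖ ≤ 1 → ‖w‖ ≤ 1 → 2 - η < f u + f w → ‖u - w‖ < ε)
    (hδη : δ ≤ r * η) (hεδ : r * ε + δ ≤ ‖z - x₀‖) (hz : ‖c - z‖ ≤ r) :
    δ ≤ f (z - x₀) := by
  by_contra! hfz
  have hD : 0 < ‖c - x₀‖ := hr.trans_le hrc
  set u := ‖c - x₀‖⁻¹ • (c - x₀)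
  set w := r⁻¹ • (c - z)
  have hfcz : f (c - z) ≤ r := (apply_le_norm_of_norm_le_one hf _).trans hz
  have hfzx : f (z - x₀) = ‖c - x₀‖ - f (c - z) := by
    rw [← hfc, ← map_sub, sub_sub_sub_cancel_left]
  have hu : ‖u‖ = 1 := by
    rw [norm_smul, norm_inv, norm_norm, inv_mul_cancel₀ hD.ne']
  have hw : ‖w‖ ≤ 1 := by
    rwa [norm_smul, norm_inv, Real.norm_of_nonneg hr.le, inv_mul_le_one₀ hr]
  have hfu : f u = 1 := by
    rw [map_smul, smul_eq_mul, hfc, inv_mul_cancel₀ hD.ne']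
  have hfw : 1 - η < f w := by
    rw [map_smul, smul_eq_mul, lt_inv_mul_iff₀ hr]
    nlinarith
  have huw : ‖u - w‖ < ε := hclose hu.le hw (by linarith)
  have : ‖z - x₀‖ < r * ε + δ := calc
    ‖z - x₀‖ ≤ r * ‖u - w‖ + (‖c - x₀‖ - r) := by
      simpa only [sub_sub_sub_cancel_left] using
        norm_sub_le_mul_norm_inv_smul_sub_add (q := c - z) hr hrc
    _ < r * ε + δ := add_lt_add (mul_lt_mul_of_pos_left huw hr) (by linarith)
  linarith

variable [UniformConvexSpace E]

theorem exists_norm_sub_lt_of_two_sub_lt_dual_add {ε : ℝ} (hε : 0 < ε) :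
    ∃ η > 0, ∀ f : StrongDual ℝ E, ‖f‖ ≤ 1 → ∀ ⦃u w : E⦄, ‖u‖ ≤ 1 → ‖w‖ ≤ 1 →
      2 - η < f u + f w → ‖u - w‖ < ε := by
  obtain ⟨η, hη, huc⟩ := exists_forall_closed_ball_dist_add_le_two_sub E hε
  refine ⟨η, hη, fun f hf u w hu hw hfuw => lt_of_not_ge fun hεuw => ?_⟩
  linarith [map_add f u w, apply_le_norm_of_norm_le_one hf (u + w), huc hu hw hεuw]

theorem exists_le_infDist_closedConvexHull_closedBall_diff_ball {b M : ℝ} (hb : 0 < b)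
    (hM : 0 < M) :
    ∃ δ > 0, ∀ (c x₀ : E) (r : ℝ), b ≤ r → r ≤ M → r ≤ dist c x₀ →
      δ ≤ infDist x₀ (closedConvexHull ℝ (closedBall c r \ ball x₀ b)) := by
  obtain ⟨η, hη, hclose⟩ := exists_norm_sub_lt_of_two_sub_lt_dual_add (E := E)
    (show 0 < b / (2 * M) by positivity)
  refine ⟨b * min η (1 / 2), by positivity, fun c x₀ r hbr hrM hrc => ?_⟩
  have hr : 0 < r := hb.trans_le hbr
  have hδη : b * min η (1 / 2) ≤ r * η := by
    nlinarith [min_le_left η (1 / 2), min_le_right η (1 / 2), lt_min hη one_half_pos]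
  have hεδ : r * (b / (2 * M)) + b * min η (1 / 2) ≤ b := by
    have : r * (b / (2 * M)) ≤ b / 2 := by
      calc r * (b / (2 * M)) ≤ M * (b / (2 * M)) := by gcongr
        _ = b / 2 := by field_simp
    nlinarith [min_le_right η (1 / 2)]
  rw [dist_eq_norm] at hrc
  obtain ⟨f, hf, hfc⟩ := exists_dual_vector ℝ (c - x₀) (hr.trans_le hrc).ne'
  have hc : c ∈ closedBall c r \ ball x₀ b := by
    rw [Set.mem_sdiff, mem_ball, not_lt, dist_eq_norm]
    exact ⟨mem_closedBall_self hr.le, hbr.trans hrc⟩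
  refine le_infDist_closedConvexHull_of_forall_le_dual ⟨c, hc⟩ hf.le fun z ⟨hzc, hzb⟩ => ?_
  rw [mem_closedBall', dist_eq_norm] at hzc
  rw [mem_ball, not_lt, dist_eq_norm] at hzb
  exact le_dual_sub_of_dual_eq_norm hf.le hfc hr hrc (hclose f hf.le) hδη (hεδ.trans hzb) hzc

end

/-- Let `X` be a uniformly convex real Banach space, `b > 0`, and `(B(x_n, R_n))` a
sequence of closed balls with `R_n > b` and `x₀ ∉ int B(x_n, R_n)` for every `n`. Set
`F_n = conv(B(x_n, R_n) \ int B(x₀, b))` (closed convex hull). If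
`dist(x₀, F_n) → 0`, then `R_n → ∞`. -/
theorem radii_tendsto_atTop
    (X : Type*) [NormedAddCommGroup X] [NormedSpace ℝ X] [UniformConvexSpace X]
    (b : ℝ) (hb : 0 < b) (x₀ : X) (x : ℕ → X) (R : ℕ → ℝ)
    (hRb : ∀ n, b < R n)
    (hx₀ : ∀ n, x₀ ∉ interior (closedBall (x n) (R n)))
    (hdist : Tendsto
      (fun n => infDist x₀
        (closedConvexHull ℝ (closedBall (x n) (R n) \ ball x₀ b)))
      atTop (nhds 0)) :
    Tendsto R atTop atTop := by
  refine tendsto_atTop.2 fun M => ?_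
  obtain ⟨δ, hδ, hsep⟩ := exists_le_infDist_closedConvexHull_closedBall_diff_ball (E := X) hb
    (lt_max_of_lt_right hb : 0 < max M b)
  filter_upwards [hdist.eventually (gt_mem_nhds hδ)] with n hn
  by_contra! hRM
  have hx₀n : R n ≤ dist (x n) x₀ := by
    simpa [interior_closedBall _ (hb.trans (hRb n)).ne', dist_comm] using hx₀ n
  exact hn.not_ge (hsep (x n) x₀ (R n) (hRb n).le (hRM.le.trans (le_max_left M b)) hx₀n)
end
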